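/- arXiv:2301.00960 — 3 statements merged into one kernel-verified Lean document; each statement's English description precedes it below -/
import Mathlib

section
/- Pasting lemma: Let D ⊆ Ω be open subsets of ℝⁿ, let u be F-superharmonic in Ω and v be F-superharmonic in D. Define s = min{u, v} in D and s = u in Ω \ D. If s is lower semicontinuous on Ω, then s is F-superharmonic in Ω. -/
/-
Since `s ≤ u`, `s` inherits from `u` finiteness on components, and if `h` is `F`-harmonic on a
compactly contained open `G` with `h ≤ s` on `∂G`, comparison for `u` gives `h ≤ u` on `G`;
this settles `G \ D`. On `G ∩ D` comparison for `v` cannot be applied directly, because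
`∂(G ∩ D)` may leave `D`. Instead, as `s ≤ v` on `D` and `s` is lower semicontinuous, the closure
of the sublevel set `{v ≤ h - ε}` stays inside `G ∩ D`, so comparison for `v` on a compactly
contained open neighbourhood of it yields `h - ε ≤ v`; then let `ε → 0`.
-/

open Filter Topology Metric Set MeasureTheory Matrix

noncomputable section

abbrev Mat (n : ℕ) := Matrix (Fin n) (Fin n) ℝ
abbrev Euc (n : ℕ) := EuclideanSpace ℝ (Fin n)

variable {n : ℕ}

/-- The Hessian matrix of a function at a point, via the second iterated Fréchet derivative. -/
def hessianMat (φ : Euc n → ℝ) (x : Euc n) : Mat n :=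
  Matrix.of fun i j =>
    iteratedFDeriv ℝ 2 φ x ![EuclideanSpace.single i 1, EuclideanSpace.single j 1]

/-- Uniform ellipticity of `F` with constants `0 < lam ≤ Lam`, measured in the
Frobenius norm `√(tr (Nᵀ N))`. -/
def UniformlyElliptic (F : Mat n → ℝ) (lam Lam : ℝ) : Prop :=
  0 < lam ∧ lam ≤ Lam ∧ ∀ M N : Mat n, N.PosSemidef →
    lam * Real.sqrt (Matrix.trace (Nᵀ * N)) ≤ F (M + N) - F M ∧
    F (M + N) - F M ≤ Lam * Real.sqrt (Matrix.trace (Nᵀ * N))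

/-- `F` is positively homogeneous of degree one. -/
def PosHomOne (F : Mat n → ℝ) : Prop :=
  ∀ t : ℝ, 0 < t → ∀ M : Mat n, F (t • M) = t * F M

/-- Viscosity supersolution of `F(D²u)=0` on `Ω` (extended-real-valued `u`). -/
def ViscSupersol (F : Mat n → ℝ) (Ω : Set (Euc n)) (u : Euc n → EReal) : Prop :=
  ∀ x₀ ∈ Ω, ∀ φ : Euc n → ℝ, ContDiff ℝ 2 φ →
    (∀ᶠ y in 𝓝[Ω] x₀, u x₀ - (φ x₀ : EReal) ≤ u y - (φ y : EReal)) →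
    F (hessianMat φ x₀) ≤ 0

/-- Viscosity subsolution of `F(D²u)=0` on `Ω`. -/
def ViscSubsol (F : Mat n → ℝ) (Ω : Set (Euc n)) (u : Euc n → EReal) : Prop :=
  ∀ x₀ ∈ Ω, ∀ φ : Euc n → ℝ, ContDiff ℝ 2 φ →
    (∀ᶠ y in 𝓝[Ω] x₀, u y - (φ y : EReal) ≤ u x₀ - (φ x₀ : EReal)) →
    0 ≤ F (hessianMat φ x₀)

/-- `h` is `F`-harmonic on an open set `D` (a real-valued viscosity solution). -/
def IsFHarmonicOn (F : Mat n → ℝ) (D : Set (Euc n)) (h : Euc n → ℝ) : Prop :=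
  ViscSupersol F D (fun x => (h x : EReal)) ∧ ViscSubsol F D (fun x => (h x : EReal))

/-- `u : Ω → (-∞,∞]` is `F`-superharmonic: lower semicontinuous, not identically `+∞`
on any component, and satisfies comparison with continuous `F`-harmonic functions on
compactly contained open subsets. -/
def IsFSuperharmonic (F : Mat n → ℝ) (Ω : Set (Euc n)) (u : Euc n → EReal) : Prop :=
  LowerSemicontinuousOn u Ω ∧
  (∀ x ∈ Ω, ∃ y ∈ connectedComponentIn Ω x, u y ≠ ⊤) ∧
  (∀ D : Set (Euc n), IsOpen D → closure D ⊆ Ω → IsCompact (closure D) →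
    ∀ h : Euc n → ℝ, ContinuousOn h (closure D) → IsFHarmonicOn F D h →
    (∀ x ∈ frontier D, (h x : EReal) ≤ u x) → ∀ x ∈ D, (h x : EReal) ≤ u x)

/-- `u : Ω → [-∞,∞)` is `F`-subharmonic. -/
def IsFSubharmonic (F : Mat n → ℝ) (Ω : Set (Euc n)) (u : Euc n → EReal) : Prop :=
  UpperSemicontinuousOn u Ω ∧
  (∀ x ∈ Ω, ∃ y ∈ connectedComponentIn Ω x, u y ≠ ⊥) ∧
  (∀ D : Set (Euc n), IsOpen D → closure D ⊆ Ω → IsCompact (closure D) →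
    ∀ h : Euc n → ℝ, ContinuousOn h (closure D) → IsFHarmonicOn F D h →
    (∀ x ∈ frontier D, u x ≤ (h x : EReal)) → ∀ x ∈ D, u x ≤ (h x : EReal))

/-- The upper class of a boundary function `f` on `∂Ω`. -/
def upperClass (F : Mat n → ℝ) (Ω : Set (Euc n)) (f : Euc n → ℝ) : Set (Euc n → EReal) :=
  {u | IsFSuperharmonic F Ω u ∧ (∃ m : ℝ, ∀ x ∈ Ω, (m : EReal) ≤ u x) ∧
    ∀ x ∈ frontier Ω, (f x : EReal) ≤ Filter.liminf u (𝓝[Ω] x)}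

/-- The lower class of a boundary function `f` on `∂Ω`. -/
def lowerClass (F : Mat n → ℝ) (Ω : Set (Euc n)) (f : Euc n → ℝ) : Set (Euc n → EReal) :=
  {u | IsFSubharmonic F Ω u ∧ (∃ m : ℝ, ∀ x ∈ Ω, u x ≤ (m : EReal)) ∧
    ∀ x ∈ frontier Ω, Filter.limsup u (𝓝[Ω] x) ≤ (f x : EReal)}

/-- The upper Perron solution. -/
def upperPerron (F : Mat n → ℝ) (Ω : Set (Euc n)) (f : Euc n → ℝ) : Euc n → EReal :=
  fun x => ⨅ u ∈ upperClass F Ω f, u x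

/-- The lower Perron solution. -/
def lowerPerron (F : Mat n → ℝ) (Ω : Set (Euc n)) (f : Euc n → ℝ) : Euc n → EReal :=
  fun x => ⨆ u ∈ lowerClass F Ω f, u x

/-- `x₀ ∈ ∂Ω` is a regular boundary point. -/
def RegularPoint (F : Mat n → ℝ) (Ω : Set (Euc n)) (x₀ : Euc n) : Prop :=
  ∀ f : Euc n → ℝ, ContinuousOn f (frontier Ω) →
    Tendsto (upperPerron F Ω f) (𝓝[Ω] x₀) (𝓝 ((f x₀ : EReal))) ∧
    Tendsto (lowerPerron F Ω f) (𝓝[Ω] x₀) (𝓝 ((f x₀ : EReal)))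

/-- An upper barrier at `x₀ ∈ ∂Ω`. -/
def IsUpperBarrier (F : Mat n → ℝ) (Ω : Set (Euc n)) (x₀ : Euc n) (w : Euc n → ℝ) : Prop :=
  IsFSuperharmonic F Ω (fun x => (w x : EReal)) ∧
  (∀ x ∈ frontier Ω, x ≠ x₀ → 0 < Filter.liminf (fun y => (w y : EReal)) (𝓝[Ω] x)) ∧
  Tendsto w (𝓝[Ω] x₀) (𝓝 0)

/-- A lower barrier at `x₀ ∈ ∂Ω`. -/
def IsLowerBarrier (F : Mat n → ℝ) (Ω : Set (Euc n)) (x₀ : Euc n) (w : Euc n → ℝ) : Prop :=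
  IsFSubharmonic F Ω (fun x => (w x : EReal)) ∧
  (∀ x ∈ frontier Ω, x ≠ x₀ → Filter.limsup (fun y => (w y : EReal)) (𝓝[Ω] x) < 0) ∧
  Tendsto w (𝓝[Ω] x₀) (𝓝 0)

/-- The admissible class for the reduced function of the constant `1` on `K` in `B`. -/
def PhiSet (F : Mat n → ℝ) (B K : Set (Euc n)) : Set (Euc n → EReal) :=
  {u | IsFSuperharmonic F B u ∧ (∀ x ∈ B, 0 ≤ u x) ∧ ∀ x ∈ K, 1 ≤ u x}

/-- The reduced function `R¹_K(B)`. -/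
def reducedFn (F : Mat n → ℝ) (B K : Set (Euc n)) : Euc n → EReal :=
  fun x => ⨅ u ∈ PhiSet F B K, u x

/-- Lower semicontinuous regularization of `w` relative to `Ω`. -/
def lscRegOn (Ω : Set (Euc n)) (w : Euc n → EReal) : Euc n → EReal :=
  fun x => ⨆ r : {r : ℝ // 0 < r}, ⨅ y ∈ Ω ∩ ball x (r : ℝ), w y

/-- The balayage (capacity potential) `R̂¹_K(B)`. -/
def balayage (F : Mat n → ℝ) (B K : Set (Euc n)) : Euc n → EReal :=
  lscRegOn B (reducedFn F B K)

/-- The non-variational capacity `cap_F(K, B_{2r}(x₀)) = R̂¹_K(B_{2r}(x₀))(y₀)`,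
where `y₀ = x₀ + (3r/2)e₁`. -/
def capF [NeZero n] (F : Mat n → ℝ) (x₀ : Euc n) (r : ℝ) (K : Set (Euc n)) : EReal :=
  balayage F (ball x₀ (2 * r)) K (x₀ + EuclideanSpace.single (0 : Fin n) (3 * r / 2))


section Harmonic

variable {F : Mat n → ℝ} {G W : Set (Euc n)}

lemma ViscSupersol.mono {u : Euc n → EReal} (hu : ViscSupersol F G u) (hW : IsOpen W)
    (hWG : W ⊆ G) : ViscSupersol F W u := fun x₀ hx₀ φ hφ hev =>
  hu x₀ (hWG hx₀) φ hφ <| hev.filter_mono <| by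
    rw [hW.nhdsWithin_eq hx₀]; exact nhdsWithin_le_nhds

lemma ViscSubsol.mono {u : Euc n → EReal} (hu : ViscSubsol F G u) (hW : IsOpen W)
    (hWG : W ⊆ G) : ViscSubsol F W u := fun x₀ hx₀ φ hφ hev =>
  hu x₀ (hWG hx₀) φ hφ <| hev.filter_mono <| by
    rw [hW.nhdsWithin_eq hx₀]; exact nhdsWithin_le_nhds

lemma IsFHarmonicOn.mono {h : Euc n → ℝ} (hh : IsFHarmonicOn F G h) (hW : IsOpen W)
    (hWG : W ⊆ G) : IsFHarmonicOn F W h :=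
  ⟨hh.1.mono hW hWG, hh.2.mono hW hWG⟩

lemma IsFHarmonicOn.sub_const {h : Euc n → ℝ} (hh : IsFHarmonicOn F G h) (c : ℝ) :
    IsFHarmonicOn F G (fun x => h x - c) := by
  have shift (a b p q : ℝ) : ((a - c : ℝ) : EReal) - p ≤ ((b - c : ℝ) : EReal) - q ↔
      (a : EReal) - p ≤ (b : EReal) - q := by
    simp only [← EReal.coe_sub, EReal.coe_le_coe_iff, sub_right_comm _ c, sub_le_sub_iff_right]
  exact ⟨fun x₀ hx₀ φ hφ hev => hh.1 x₀ hx₀ φ hφ (hev.mono fun _ hy => (shift ..).1 hy),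
    fun x₀ hx₀ φ hφ hev => hh.2 x₀ hx₀ φ hφ (hev.mono fun _ hy => (shift ..).1 hy)⟩

end Harmonic

lemma LowerSemicontinuousWithinAt.le_of_mem_closure {X : Type*} [TopologicalSpace X]
    {f : X → EReal} {g : X → ℝ} {B : Set X} {x : X} (hf : LowerSemicontinuousWithinAt f B x)
    (hg : ContinuousWithinAt g B x) (hx : x ∈ closure B) (hle : ∀ y ∈ B, f y ≤ g y) :
    f x ≤ g x := by
  by_contra! hlt
  obtain ⟨c, hgc, hcf⟩ := EReal.exists_between_coe_real hlt
  have := mem_closure_iff_nhdsWithin_neBot.mp hx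
  obtain ⟨y, hcfy, hgcy, hyB⟩ :=
    ((hf c hcf).and ((hg.eventually_lt_const (EReal.coe_lt_coe_iff.mp hgc)).and
      self_mem_nhdsWithin)).exists
  exact (hcfy.trans_le (hle y hyB)).not_ge (EReal.coe_le_coe_iff.mpr hgcy.le)

lemma closure_setOf_le_sub_subset {X : Type*} [TopologicalSpace X] {Ω G D : Set X}
    {s v : X → EReal} {h : X → ℝ} {ε : ℝ} (hs : LowerSemicontinuousOn s Ω)
    (hGΩ : closure G ⊆ Ω) (hh : ContinuousOn h (closure G)) (hε : 0 < ε)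
    (hsv : ∀ x ∈ D, s x ≤ v x) (hhs : ∀ x ∈ closure G \ (G ∩ D), (h x : EReal) ≤ s x) :
    closure {x | x ∈ G ∩ D ∧ v x ≤ ((h x - ε : ℝ) : EReal)} ⊆ G ∩ D := by
  set B := {x | x ∈ G ∩ D ∧ v x ≤ ((h x - ε : ℝ) : EReal)}
  intro x hx
  have hBG : B ⊆ closure G := fun y hy => subset_closure hy.1.1
  have hxG : x ∈ closure G := closure_minimal hBG isClosed_closure hx
  have hsx : s x ≤ ((h x - ε : ℝ) : EReal) :=
    LowerSemicontinuousWithinAt.le_of_mem_closure ((hs x (hGΩ hxG)).mono (hBG.trans hGΩ))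
      (((hh x hxG).mono hBG).sub continuousWithinAt_const) hx
      fun y hy => (hsv y hy.1.2).trans hy.2
  by_contra hxGD
  exact ((hhs x ⟨hxG, hxGD⟩).trans hsx).not_gt (EReal.coe_lt_coe_iff.mpr (by linarith))

section Superharmonic

variable {F : Mat n → ℝ} {G D : Set (Euc n)} {v : Euc n → EReal} {h : Euc n → ℝ}

lemma IsFSuperharmonic.coe_le_of_closure_setOf_le_subset (hv : IsFSuperharmonic F D v)
    (hD : IsOpen D) (hG : IsOpen G) (hGc : IsCompact (closure G))
    (hcont : ContinuousOn h (closure G)) (hh : IsFHarmonicOn F G h)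
    (hB : closure {x | x ∈ G ∩ D ∧ v x ≤ (h x : EReal)} ⊆ G ∩ D) :
    ∀ x ∈ G ∩ D, (h x : EReal) ≤ v x := by
  set B := {x | x ∈ G ∩ D ∧ v x ≤ (h x : EReal)}
  have hle_of_notMem : ∀ x ∈ G ∩ D, x ∉ B → (h x : EReal) ≤ v x :=
    fun x hx hxB => (not_le.mp fun hle => hxB ⟨hx, hle⟩).le
  obtain ⟨W, hW, hBW, hWGD, hWc⟩ := exists_open_between_and_isCompact_closure
    (hGc.of_isClosed_subset isClosed_closure (closure_mono fun x hx => hx.1.1))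
    (hG.inter hD) hB
  have hWG : W ⊆ G := subset_closure.trans (hWGD.trans inter_subset_left)
  have hWv : ∀ x ∈ W, (h x : EReal) ≤ v x :=
    hv.2.2 W hW (hWGD.trans inter_subset_right) hWc h (hcont.mono (closure_mono hWG))
      (hh.mono hW hWG) fun x hx => hle_of_notMem x (hWGD hx.1) fun hxB =>
        hx.2 (hW.interior_eq.symm ▸ hBW (subset_closure hxB))
  intro x hx
  by_cases hxB : x ∈ B
  · exact hWv x (hBW (subset_closure hxB))
  · exact hle_of_notMem x hx hxB

lemma IsFSuperharmonic.coe_le_of_lowerSemicontinuousOn_le {Ω : Set (Euc n)} {s : Euc n → EReal}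
    (hv : IsFSuperharmonic F D v) (hD : IsOpen D) (hG : IsOpen G) (hGc : IsCompact (closure G))
    (hcont : ContinuousOn h (closure G)) (hh : IsFHarmonicOn F G h)
    (hs : LowerSemicontinuousOn s Ω) (hGΩ : closure G ⊆ Ω) (hsv : ∀ x ∈ D, s x ≤ v x)
    (hhs : ∀ x ∈ closure G \ (G ∩ D), (h x : EReal) ≤ s x) :
    ∀ x ∈ G ∩ D, (h x : EReal) ≤ v x := fun x hx =>
  EReal.ge_of_forall_gt_iff_ge.mp fun c hc => by
    have hε : 0 < h x - c := sub_pos.mpr (EReal.coe_lt_coe_iff.mp hc)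
    simpa using hv.coe_le_of_closure_setOf_le_subset hD hG hGc (hcont.sub continuousOn_const)
      (hh.sub_const _) (closure_setOf_le_sub_subset hs hGΩ hcont hε hsv hhs) x hx

end Superharmonic

theorem stmt_4_general {n : ℕ} (F : Mat n → ℝ)
    (Ω D : Set (Euc n)) (hD : IsOpen D)
    (u v : Euc n → EReal) (hu : IsFSuperharmonic F Ω u) (hv : IsFSuperharmonic F D v)
    (s : Euc n → EReal) (hsD : ∀ x ∈ D, s x = min (u x) (v x))
    (hsc : ∀ x ∈ Ω \ D, s x = u x)
    (hlsc : LowerSemicontinuousOn s Ω) :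
    IsFSuperharmonic F Ω s := by
  have hsu : ∀ x ∈ Ω, s x ≤ u x := fun x hx => by
    by_cases hxD : x ∈ D
    · exact hsD x hxD ▸ min_le_left _ _
    · exact (hsc x ⟨hx, hxD⟩).le
  refine ⟨hlsc, fun x hx => ?_, fun G hG hGΩ hGc h hcont hh hbd => ?_⟩
  · obtain ⟨y, hy, hyu⟩ := hu.2.1 x hx
    exact ⟨y, hy, ne_top_of_le_ne_top hyu (hsu y (connectedComponentIn_subset Ω x hy))⟩
  have hhu : ∀ x ∈ G, (h x : EReal) ≤ u x :=
    hu.2.2 G hG hGΩ hGc h hcont hh fun x hx => (hbd x hx).trans (hsu x (hGΩ hx.1))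
  have hhs : ∀ x ∈ closure G \ (G ∩ D), (h x : EReal) ≤ s x := by
    rintro x ⟨hxG, hxGD⟩
    by_cases hxG' : x ∈ G
    · exact (hsc x ⟨hGΩ hxG, fun hxD => hxGD ⟨hxG', hxD⟩⟩).symm ▸ hhu x hxG'
    · exact hbd x ⟨hxG, hG.interior_eq.symm ▸ hxG'⟩
  have hhv : ∀ x ∈ G ∩ D, (h x : EReal) ≤ v x :=
    hv.coe_le_of_lowerSemicontinuousOn_le hD hG hGc hcont hh hlsc hGΩ
      (fun x hx => hsD x hx ▸ min_le_right _ _) hhs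
  intro x hx
  by_cases hxD : x ∈ D
  · exact hsD x hxD ▸ le_min (hhu x hx) (hhv x ⟨hx, hxD⟩)
  · exact (hsc x ⟨hGΩ (subset_closure hx), hxD⟩).symm ▸ hhu x hx

/-- pasting lemma. The comparison principle for `F`-super/subharmonic
functions (Theorem 2.9 of the paper) is assumed as a hypothesis. -/
theorem stmt_4 {n : ℕ} (F : Mat n → ℝ)
    (hcomp : ∀ O : Set (Euc n), IsOpen O → Bornology.IsBounded O →
      ∀ U V : Euc n → EReal, IsFSuperharmonic F O U → IsFSubharmonic F O V →
        (∀ x ∈ frontier O, Filter.limsup V (𝓝[O] x) ≤ Filter.liminf U (𝓝[O] x)) →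
        ∀ x ∈ O, V x ≤ U x)
    (Ω D : Set (Euc n)) (hΩ : IsOpen Ω) (hD : IsOpen D) (hDΩ : D ⊆ Ω)
    (u v : Euc n → EReal) (hu : IsFSuperharmonic F Ω u) (hv : IsFSuperharmonic F D v)
    (s : Euc n → EReal) (hsD : ∀ x ∈ D, s x = min (u x) (v x))
    (hsc : ∀ x ∈ Ω \ D, s x = u x)
    (hlsc : LowerSemicontinuousOn s Ω) :
    IsFSuperharmonic F Ω s :=
  stmt_4_general F Ω D hD u v hu hv s hsD hsc hlsc
end
end

section
/- If ℱ is a family of F-superharmonic functions in Ω that is locally uniformly bounded below, then the lower semicontinuous regularization s(x) = lim_{r→0} inf_{B_r(x)} (inf ℱ) is F-superharmonic in Ω. -/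
open Filter Topology Metric Set MeasureTheory Matrix

noncomputable section

variable {n : ℕ}

/-!
Each `u ∈ ℱ` dominates a continuous `F`-harmonic `h` on `D` as soon as `w = inf ℱ` does on
`∂D`, hence so does `w` in `D`. The regularization `s ≤ w` is lower semicontinuous, and it
still dominates `h` in `D`: near a point of the open set `D`, `w` lies above `h`, and by
continuity `h` stays above any level `c < h x` on a small ball, so `c ≤ s x`.
-/

section LscReg

variable {Ω : Set (Euc n)} {w : Euc n → EReal}

theorem lscRegOn_le {x : Euc n} (hx : x ∈ Ω) : lscRegOn Ω w x ≤ w x :=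
  iSup_le fun r => biInf_le w ⟨hx, mem_ball_self r.2⟩

theorem lowerSemicontinuous_lscRegOn : LowerSemicontinuous (lscRegOn Ω w) := by
  intro x c hc
  obtain ⟨⟨r, hr⟩, hlt⟩ := lt_iSup_iff.mp hc
  filter_upwards [ball_mem_nhds x (half_pos hr)] with y hy
  have hsub : ball y (r / 2) ⊆ ball x r :=
    ball_subset_ball' (by linarith [mem_ball.mp hy])
  calc c < ⨅ z ∈ Ω ∩ ball x r, w z := hlt
    _ ≤ ⨅ z ∈ Ω ∩ ball y (r / 2), w z := biInf_mono fun z hz => ⟨hz.1, hsub hz.2⟩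
    _ ≤ lscRegOn Ω w y :=
      le_iSup (fun t : {t : ℝ // 0 < t} => ⨅ z ∈ Ω ∩ ball y (t : ℝ), w z) ⟨r / 2, half_pos hr⟩

theorem le_lscRegOn_of_lowerSemicontinuousAt {g : Euc n → EReal} {x : Euc n}
    (hg : LowerSemicontinuousAt g x) (hgw : ∀ᶠ y in 𝓝[Ω] x, g y ≤ w y) :
    g x ≤ lscRegOn Ω w x := by
  refine le_of_forall_lt_imp_le_of_dense fun c hc => ?_
  obtain ⟨r, hr, hball⟩ :=
    Metric.mem_nhdsWithin_iff.mp (((hg c hc).filter_mono nhdsWithin_le_nhds).and hgw)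
  calc c ≤ ⨅ y ∈ Ω ∩ ball x r, w y := le_iInf₂ fun y hy => by
        obtain ⟨hcg, hgy⟩ := hball ⟨hy.2, hy.1⟩
        exact hcg.le.trans hgy
    _ ≤ lscRegOn Ω w x :=
      le_iSup (fun t : {t : ℝ // 0 < t} => ⨅ y ∈ Ω ∩ ball x (t : ℝ), w y) ⟨r, hr⟩

end LscReg

theorem le_biInf_of_isFSuperharmonic {F : Mat n → ℝ} {Ω D : Set (Euc n)}
    {ℱ : Set (Euc n → EReal)} (hsh : ∀ u ∈ ℱ, IsFSuperharmonic F Ω u) (hD : IsOpen D)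
    (hDΩ : closure D ⊆ Ω) (hDc : IsCompact (closure D)) {h : Euc n → ℝ}
    (hcont : ContinuousOn h (closure D)) (hharm : IsFHarmonicOn F D h)
    (hbd : ∀ x ∈ frontier D, (h x : EReal) ≤ ⨅ u ∈ ℱ, u x) :
    ∀ x ∈ D, (h x : EReal) ≤ ⨅ u ∈ ℱ, u x :=
  fun x hx => le_iInf₂ fun u hu =>
    (hsh u hu).2.2 D hD hDΩ hDc h hcont hharm
      (fun y hy => (hbd y hy).trans (biInf_le (fun u => u y) hu)) x hx

theorem stmt_5_general {n : ℕ} (F : Mat n → ℝ) (Ω : Set (Euc n))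
    (ℱ : Set (Euc n → EReal)) (hne : ℱ.Nonempty)
    (hsh : ∀ u ∈ ℱ, IsFSuperharmonic F Ω u) :
    IsFSuperharmonic F Ω (lscRegOn Ω (fun x => ⨅ u ∈ ℱ, u x)) := by
  set w : Euc n → EReal := fun x => ⨅ u ∈ ℱ, u x
  refine ⟨lowerSemicontinuous_lscRegOn.lowerSemicontinuousOn Ω, ?_, ?_⟩
  · intro x hx
    obtain ⟨u, hu⟩ := hne
    obtain ⟨y, hy, hy_ne_top⟩ := (hsh u hu).2.1 x hx
    refine ⟨y, hy, ne_top_of_le_ne_top hy_ne_top ?_⟩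
    exact (lscRegOn_le (connectedComponentIn_subset Ω x hy)).trans (biInf_le (fun u => u y) hu)
  · intro D hD hDΩ hDc h hcont hharm hbd x hx
    have hhw : ∀ y ∈ D, (h y : EReal) ≤ w y :=
      le_biInf_of_isFSuperharmonic hsh hD hDΩ hDc hcont hharm fun y hy =>
        (hbd y hy).trans (lscRegOn_le (hDΩ (frontier_subset_closure hy)))
    have hcx : ContinuousAt h x :=
      hcont.continuousAt (mem_of_superset (hD.mem_nhds hx) subset_closure)
    refine le_lscRegOn_of_lowerSemicontinuousAt
      (continuous_coe_real_ereal.continuousAt.comp hcx).lowerSemicontinuousAt ?_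
    filter_upwards [nhdsWithin_le_nhds (hD.mem_nhds hx)] using hhw

/-- the lower semicontinuous regularization of the infimum of a
(nonempty) family of `F`-superharmonic functions that is locally uniformly bounded
below is `F`-superharmonic. -/
theorem stmt_5 {n : ℕ} (F : Mat n → ℝ) (Ω : Set (Euc n)) (hΩ : IsOpen Ω)
    (ℱ : Set (Euc n → EReal)) (hne : ℱ.Nonempty)
    (hsh : ∀ u ∈ ℱ, IsFSuperharmonic F Ω u)
    (hbdd : ∀ x ∈ Ω, ∃ r > (0 : ℝ), ∃ m : ℝ, ∀ u ∈ ℱ, ∀ y ∈ Ω ∩ ball x r, (m : EReal) ≤ u y) :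
    IsFSuperharmonic F Ω (lscRegOn Ω (fun x => ⨅ u ∈ ℱ, u x)) :=
  stmt_5_general F Ω ℱ hne hsh
end
end

section
/- If u is a bounded F-superharmonic function on a bounded open set Ω such that f(x) := lim_{Ω∋y→x} u(y) exists for every x ∈ ∂Ω, then f is a resolutive boundary function, i.e. the upper and lower Perron solutions of f coincide. -/
open Filter Topology Metric Set MeasureTheory Matrix

noncomputable section

variable {n : ℕ}

/-! `u` itself lies in the upper class, so `H̄_f ≤ u`; since `u` has boundary values `f`,
the subharmonic function `H̄_f` then lies in the lower class, whence `H̄_f ≤ H̲_f`. -/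

theorem Filter.Tendsto.le_liminf {α β : Type*} [CompleteLinearOrder α] [TopologicalSpace α]
    [OrderTopology α] {l : Filter β} {u : β → α} {a : α} (h : Tendsto u l (𝓝 a)) :
    a ≤ liminf u l := by
  rcases l.eq_or_neBot with rfl | _
  · simp
  · exact h.liminf_eq.ge

theorem Filter.Tendsto.limsup_le {α β : Type*} [CompleteLinearOrder α] [TopologicalSpace α]
    [OrderTopology α] {l : Filter β} {u : β → α} {a : α} (h : Tendsto u l (𝓝 a)) :
    limsup u l ≤ a :=
  h.le_liminf (α := αᵒᵈ)

section Perron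

variable {F : Mat n → ℝ} {Ω : Set (Euc n)} {f : Euc n → ℝ}

theorem upperPerron_le {u : Euc n → EReal} (hu : u ∈ upperClass F Ω f) (x : Euc n) :
    upperPerron F Ω f x ≤ u x :=
  biInf_le (fun v : Euc n → EReal => v x) hu

theorem le_lowerPerron {v : Euc n → EReal} (hv : v ∈ lowerClass F Ω f) (x : Euc n) :
    v x ≤ lowerPerron F Ω f x :=
  le_biSup (fun w : Euc n → EReal => w x) hv

theorem mem_upperClass_of_tendsto {u : Euc n → EReal} (hu : IsFSuperharmonic F Ω u)
    (hbdd : ∃ m : ℝ, ∀ x ∈ Ω, (m : EReal) ≤ u x)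
    (hf : ∀ x ∈ frontier Ω, Tendsto u (𝓝[Ω] x) (𝓝 (f x : EReal))) :
    u ∈ upperClass F Ω f :=
  ⟨hu, hbdd, fun x hx => (hf x hx).le_liminf⟩

theorem upperPerron_mem_lowerClass {u : Euc n → EReal} (hu : u ∈ upperClass F Ω f)
    (hbdd : ∃ M : ℝ, ∀ x ∈ Ω, u x ≤ (M : EReal))
    (hf : ∀ x ∈ frontier Ω, Tendsto u (𝓝[Ω] x) (𝓝 (f x : EReal)))
    (hsub : IsFSubharmonic F Ω (upperPerron F Ω f)) :
    upperPerron F Ω f ∈ lowerClass F Ω f := by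
  obtain ⟨M, hM⟩ := hbdd
  refine ⟨hsub, ⟨M, fun x hx => (upperPerron_le hu x).trans (hM x hx)⟩, fun x hx => ?_⟩
  calc limsup (upperPerron F Ω f) (𝓝[Ω] x) ≤ limsup u (𝓝[Ω] x) :=
        limsup_le_limsup (Eventually.of_forall (upperPerron_le hu))
    _ ≤ f x := (hf x hx).limsup_le

end Perron

theorem stmt_8_general {n : ℕ} (F : Mat n → ℝ) (Ω : Set (Euc n)) (u : Euc n → EReal)
    (hu : IsFSuperharmonic F Ω u)
    (hubdd : ∃ m M : ℝ, ∀ x ∈ Ω, (m : EReal) ≤ u x ∧ u x ≤ (M : EReal))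
    (f : Euc n → ℝ)
    (hf : ∀ x ∈ frontier Ω, Tendsto u (𝓝[Ω] x) (𝓝 ((f x : EReal))))
    (hharm : IsFSubharmonic F Ω (upperPerron F Ω f) ∧
      IsFSuperharmonic F Ω (upperPerron F Ω f))
    (hcomp : ∀ x ∈ Ω, lowerPerron F Ω f x ≤ upperPerron F Ω f x) :
    ∀ x ∈ Ω, upperPerron F Ω f x = lowerPerron F Ω f x := by
  obtain ⟨m, M, hmM⟩ := hubdd
  have huUC : u ∈ upperClass F Ω f :=
    mem_upperClass_of_tendsto hu ⟨m, fun x hx => (hmM x hx).1⟩ hf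
  have hLC : upperPerron F Ω f ∈ lowerClass F Ω f :=
    upperPerron_mem_lowerClass huUC ⟨M, fun x hx => (hmM x hx).2⟩ hf hharm.1
  exact fun x hx => le_antisymm (le_lowerPerron hLC x) (hcomp x hx)

/-- if `u` is a bounded `F`-superharmonic function on a bounded open `Ω`
whose boundary limits `f(x) = lim_{Ω ∋ y → x} u(y)` exist at every `x ∈ ∂Ω`, then `f`
is resolutive. (That `H̄_f` is `F`-harmonic and `H̲_f ≤ H̄_f` may be assumed.) -/
theorem stmt_8 {n : ℕ} (F : Mat n → ℝ) (Ω : Set (Euc n)) (hΩ : IsOpen Ω)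
    (hΩb : Bornology.IsBounded Ω) (u : Euc n → EReal)
    (hu : IsFSuperharmonic F Ω u)
    (hubdd : ∃ m M : ℝ, ∀ x ∈ Ω, (m : EReal) ≤ u x ∧ u x ≤ (M : EReal))
    (f : Euc n → ℝ)
    (hf : ∀ x ∈ frontier Ω, Tendsto u (𝓝[Ω] x) (𝓝 ((f x : EReal))))
    (hharm : IsFSubharmonic F Ω (upperPerron F Ω f) ∧
      IsFSuperharmonic F Ω (upperPerron F Ω f))
    (hcomp : ∀ x ∈ Ω, lowerPerron F Ω f x ≤ upperPerron F Ω f x) :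
    ∀ x ∈ Ω, upperPerron F Ω f x = lowerPerron F Ω f x :=
  stmt_8_general F Ω u hu hubdd f hf hharm hcomp
end
end
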